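/- Let d_E, d_P, d_A ≥ 1 and let C₀, C₁ ∈ ℂ^{d_P} ⊗ ℂ^{d_A} be orthonormal vectors such that ⟨C₀, (B ⊗ I_{d_A}) C₁⟩ = 0 for every d_P×d_P complex matrix B. Let P = I_{d_E} ⊗ (C₀C₀† + C₁C₁†), a projector on ℂ^{d_E} ⊗ ℂ^{d_P} ⊗ ℂ^{d_A}. Then for every matrix H on ℂ^{d_E} ⊗ ℂ^{d_P} and every d_P×d_P matrix G, the matrices P(H ⊗ I_{d_A})P and P(I_{d_E} ⊗ G ⊗ I_{d_A})P commute: [P(H ⊗ I_{d_A})P, P(I_{d_E} ⊗ G ⊗ I_{d_A})P] = 0. -/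
import Mathlib


open scoped BigOperators

/-- The standard inner product (conjugate-linear in the first slot) on `ℂ^{d_P} ⊗ ℂ^{d_A}`. -/
noncomputable def innPA {dP dA : ℕ} (x y : Fin dP × Fin dA → ℂ) : ℂ :=
  ∑ p : Fin dP × Fin dA, (starRingEnd ℂ) (x p) * y p

/-- The action of `B ⊗ I_{d_A}` on a vector of `ℂ^{d_P} ⊗ ℂ^{d_A}`. -/
noncomputable def applyBI {dP dA : ℕ} (B : Matrix (Fin dP) (Fin dP) ℂ)
    (v : Fin dP × Fin dA → ℂ) : Fin dP × Fin dA → ℂ :=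
  fun p => ∑ j : Fin dP, B p.1 j * v (j, p.2)

/-- The rank-one projector `CC†` onto a vector `C ∈ ℂ^{d_P} ⊗ ℂ^{d_A}`. -/
noncomputable def rankOne {dP dA : ℕ} (C : Fin dP × Fin dA → ℂ) :
    Matrix (Fin dP × Fin dA) (Fin dP × Fin dA) ℂ :=
  Matrix.of fun p q => C p * (starRingEnd ℂ) (C q)

/-- The matrix `I_{d_E} ⊗ Q` on `ℂ^{d_E} ⊗ ℂ^{d_P} ⊗ ℂ^{d_A}`. -/
noncomputable def envId {dE dP dA : ℕ} (Q : Matrix (Fin dP × Fin dA) (Fin dP × Fin dA) ℂ) :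
    Matrix (Fin dE × Fin dP × Fin dA) (Fin dE × Fin dP × Fin dA) ℂ :=
  Matrix.of fun p q => (if p.1 = q.1 then 1 else 0) * Q p.2 q.2

/-- The matrix `H ⊗ I_{d_A}` on `ℂ^{d_E} ⊗ ℂ^{d_P} ⊗ ℂ^{d_A}`, for `H` acting on
environment and probe. -/
noncomputable def HtensI {dE dP dA : ℕ} (H : Matrix (Fin dE × Fin dP) (Fin dE × Fin dP) ℂ) :
    Matrix (Fin dE × Fin dP × Fin dA) (Fin dE × Fin dP × Fin dA) ℂ :=
  Matrix.of fun p q => H (p.1, p.2.1) (q.1, q.2.1) * (if p.2.2 = q.2.2 then 1 else 0)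

/-- The matrix `I_{d_E} ⊗ G ⊗ I_{d_A}` on `ℂ^{d_E} ⊗ ℂ^{d_P} ⊗ ℂ^{d_A}`, for `G` acting on
the probe. -/
noncomputable def GtensI {dE dP dA : ℕ} (G : Matrix (Fin dP) (Fin dP) ℂ) :
    Matrix (Fin dE × Fin dP × Fin dA) (Fin dE × Fin dP × Fin dA) ℂ :=
  Matrix.of fun p q =>
    (if p.1 = q.1 then 1 else 0) * G p.2.1 q.2.1 * (if p.2.2 = q.2.2 then 1 else 0)

/-! ### Auxiliary definitions and lemmas -/

/-- The rank-one operator `C D†`. -/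
noncomputable def outerCD {dP dA : ℕ} (C D : Fin dP × Fin dA → ℂ) :
    Matrix (Fin dP × Fin dA) (Fin dP × Fin dA) ℂ :=
  Matrix.of fun p q => C p * (starRingEnd ℂ) (D q)

lemma rankOne_eq_outerCD {dP dA : ℕ} (C : Fin dP × Fin dA → ℂ) :
    rankOne C = outerCD C C := rfl

/-- `G ⊗ I_{d_A}` as a matrix on the probe-ancilla space. -/
noncomputable def Gpa {dP dA : ℕ} (G : Matrix (Fin dP) (Fin dP) ℂ) :
    Matrix (Fin dP × Fin dA) (Fin dP × Fin dA) ℂ :=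
  Matrix.of fun p q => G p.1 q.1 * (if p.2 = q.2 then 1 else 0)

lemma GtensI_eq_envId {dE dP dA : ℕ} (G : Matrix (Fin dP) (Fin dP) ℂ) :
    GtensI (dE := dE) (dA := dA) G = envId (Gpa G) := by
  ext p q
  simp [GtensI, envId, Gpa, mul_assoc]

lemma innPA_conj {dP dA : ℕ} (x y : Fin dP × Fin dA → ℂ) :
    innPA x y = (starRingEnd ℂ) (innPA y x) := by
  simp only [innPA, map_sum, map_mul, Complex.conj_conj]
  exact Finset.sum_congr rfl fun r _ => by ring

lemma innPA_applyBI_conj {dP dA : ℕ} (x y : Fin dP × Fin dA → ℂ)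
    (B : Matrix (Fin dP) (Fin dP) ℂ) :
    innPA x (applyBI B y) = (starRingEnd ℂ) (innPA y (applyBI B.conjTranspose x)) := by
  simp only [innPA, applyBI, map_sum, map_mul, Complex.conj_conj,
    Matrix.conjTranspose_apply, Fintype.sum_prod_type, Finset.mul_sum]
  rw [Finset.sum_comm]
  conv_rhs => rw [Finset.sum_comm]
  refine Finset.sum_congr rfl fun a _ => ?_
  rw [Finset.sum_comm]
  exact Finset.sum_congr rfl fun k _ => Finset.sum_congr rfl fun l _ => by
    simp only [RCLike.star_def, Complex.conj_conj]; ring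

lemma outerCD_mul_outerCD {dP dA : ℕ} (C D E F : Fin dP × Fin dA → ℂ) :
    outerCD C D * outerCD E F = innPA D E • outerCD C F := by
  ext p q
  simp only [Matrix.mul_apply, outerCD, Matrix.of_apply, Matrix.smul_apply, innPA,
    smul_eq_mul, Finset.sum_mul]
  exact Finset.sum_congr rfl fun r _ => by ring

lemma envId_mul {dE dP dA : ℕ} (Q R : Matrix (Fin dP × Fin dA) (Fin dP × Fin dA) ℂ) :
    envId (dE := dE) Q * envId R = envId (Q * R) := by
  ext p q
  rw [Matrix.mul_apply]
  simp only [Fintype.sum_prod_type]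
  simp [envId, Matrix.mul_apply, ite_mul, mul_ite, Finset.mul_sum, Finset.sum_ite_eq',
    Fintype.sum_prod_type]

lemma envId_add {dE dP dA : ℕ} (Q R : Matrix (Fin dP × Fin dA) (Fin dP × Fin dA) ℂ) :
    envId (dE := dE) (Q + R) = envId Q + envId R := by
  ext p q
  simp [envId, mul_add]

lemma envId_smul {dE dP dA : ℕ} (a : ℂ) (Q : Matrix (Fin dP × Fin dA) (Fin dP × Fin dA) ℂ) :
    envId (dE := dE) (a • Q) = a • envId Q := by
  ext p q
  simp only [envId, Matrix.smul_apply, Matrix.of_apply, smul_eq_mul]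
  ring

lemma outerCD_Gpa_outerCD {dP dA : ℕ} (C D E F : Fin dP × Fin dA → ℂ)
    (G : Matrix (Fin dP) (Fin dP) ℂ) :
    outerCD C D * Gpa G * outerCD E F = innPA D (applyBI G E) • outerCD C F := by
  ext p q
  simp only [Matrix.mul_apply, outerCD, Gpa, Matrix.of_apply, Matrix.smul_apply,
    innPA, applyBI, smul_eq_mul, Finset.sum_mul, Finset.mul_sum,
    Fintype.sum_prod_type, mul_ite, ite_mul, mul_zero, zero_mul, mul_one,
    Finset.sum_ite_eq, Finset.sum_ite_eq', Finset.mem_univ, if_true]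
  rw [Finset.sum_comm]
  conv_rhs => rw [Finset.sum_comm]
  refine Finset.sum_congr rfl fun b _ => ?_
  rw [Finset.sum_comm]
  exact Finset.sum_congr rfl fun a _ => Finset.sum_congr rfl fun c _ => by ring

lemma envId_HtensI_cross {dE dP dA : ℕ} (C D E F : Fin dP × Fin dA → ℂ)
    (H : Matrix (Fin dE × Fin dP) (Fin dE × Fin dP) ℂ)
    (hc : ∀ B : Matrix (Fin dP) (Fin dP) ℂ, innPA D (applyBI B E) = 0) :
    envId (dE := dE) (outerCD C D) * HtensI H * envId (outerCD E F) = 0 := by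
  have h2 : ∀ e f : Fin dE,
      (∑ k : Fin dP, ∑ a : Fin dA, ∑ l : Fin dP,
        (starRingEnd ℂ) (D (k, a)) * (H (e, k) (f, l) * E (l, a))) = 0 := by
    intro e f
    have := hc (Matrix.of fun i j => H (e, i) (f, j))
    simpa [innPA, applyBI, Fintype.sum_prod_type, Finset.mul_sum] using this
  ext p q
  simp only [Matrix.mul_apply, envId, outerCD, HtensI, Matrix.of_apply, Matrix.zero_apply,
    Fintype.sum_prod_type, mul_ite, ite_mul, mul_zero, zero_mul, mul_one, one_mul,
    Finset.sum_ite_eq, Finset.sum_ite_eq', Finset.mem_univ, if_true,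
    Finset.sum_ite_irrel, Finset.sum_const_zero, Finset.sum_mul, Finset.mul_sum]
  calc (∑ x : Fin dP, ∑ x_1 : Fin dA, ∑ x_2 : Fin dP,
        C p.2 * (starRingEnd ℂ) (D (x_2, x_1)) * H (p.1, x_2) (q.1, x) *
          (E (x, x_1) * (starRingEnd ℂ) (F q.2)))
      = C p.2 * (starRingEnd ℂ) (F q.2) *
          ∑ k : Fin dP, ∑ a : Fin dA, ∑ l : Fin dP,
            (starRingEnd ℂ) (D (k, a)) * (H (p.1, k) (q.1, l) * E (l, a)) := by
        simp only [Finset.mul_sum]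
        rw [Finset.sum_comm]
        conv_rhs => rw [Finset.sum_comm]
        refine Finset.sum_congr rfl fun a _ => ?_
        rw [Finset.sum_comm]
        exact Finset.sum_congr rfl fun k _ => Finset.sum_congr rfl fun l _ => by ring
    _ = 0 := by rw [h2, mul_zero]


/-- If `C₀, C₁ ∈ ℂ^{d_P} ⊗ ℂ^{d_A}` are orthonormal and
`⟨C₀,(B ⊗ I)C₁⟩ = 0` for every probe operator `B`, then with
`P = I_{d_E} ⊗ (C₀C₀† + C₁C₁†)` we have `[P(H⊗I)P, P(I⊗G⊗I)P] = 0` for every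
environment-probe matrix `H` and every probe matrix `G`. -/
theorem stmt6 (dE dP dA : ℕ) (hdE : 1 ≤ dE) (hdP : 1 ≤ dP) (hdA : 1 ≤ dA)
    (C₀ C₁ : Fin dP × Fin dA → ℂ)
    (hC₀ : innPA C₀ C₀ = 1) (hC₁ : innPA C₁ C₁ = 1) (hC₀₁ : innPA C₀ C₁ = 0)
    (hcross : ∀ B : Matrix (Fin dP) (Fin dP) ℂ, innPA C₀ (applyBI B C₁) = 0) :
    ∀ (H : Matrix (Fin dE × Fin dP) (Fin dE × Fin dP) ℂ)
      (G : Matrix (Fin dP) (Fin dP) ℂ),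
      (envId (dE := dE) (rankOne C₀ + rankOne C₁) * HtensI H
          * envId (dE := dE) (rankOne C₀ + rankOne C₁))
        * (envId (dE := dE) (rankOne C₀ + rankOne C₁) * GtensI G
          * envId (dE := dE) (rankOne C₀ + rankOne C₁))
      - (envId (dE := dE) (rankOne C₀ + rankOne C₁) * GtensI G
          * envId (dE := dE) (rankOne C₀ + rankOne C₁))
        * (envId (dE := dE) (rankOne C₀ + rankOne C₁) * HtensI H
          * envId (dE := dE) (rankOne C₀ + rankOne C₁)) = 0 := by
  intro H G
  have hC₁₀ : innPA C₁ C₀ = 0 := by rw [innPA_conj, hC₀₁, map_zero]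
  have hcross' : ∀ B : Matrix (Fin dP) (Fin dP) ℂ, innPA C₁ (applyBI B C₀) = 0 := by
    intro B
    rw [innPA_applyBI_conj, hcross, map_zero]
  set Q₀ := rankOne C₀ with hQ₀
  set Q₁ := rankOne C₁ with hQ₁
  set M₀ : Matrix (Fin dE × Fin dP × Fin dA) (Fin dE × Fin dP × Fin dA) ℂ := envId Q₀ with hM₀
  set M₁ : Matrix (Fin dE × Fin dP × Fin dA) (Fin dE × Fin dP × Fin dA) ℂ := envId Q₁ with hM₁
  set P : Matrix (Fin dE × Fin dP × Fin dA) (Fin dE × Fin dP × Fin dA) ℂ :=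
    envId (Q₀ + Q₁) with hP
  have hPsum : P = M₀ + M₁ := envId_add Q₀ Q₁
  -- products of the probe-ancilla projectors
  have hQ00 : Q₀ * Q₀ = Q₀ := by
    rw [hQ₀, rankOne_eq_outerCD, outerCD_mul_outerCD, hC₀, one_smul]
  have hQ11 : Q₁ * Q₁ = Q₁ := by
    rw [hQ₁, rankOne_eq_outerCD, outerCD_mul_outerCD, hC₁, one_smul]
  have hQ01 : Q₀ * Q₁ = 0 := by
    rw [hQ₀, hQ₁, rankOne_eq_outerCD, rankOne_eq_outerCD, outerCD_mul_outerCD, hC₀₁, zero_smul]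
  have hQ10 : Q₁ * Q₀ = 0 := by
    rw [hQ₀, hQ₁, rankOne_eq_outerCD, rankOne_eq_outerCD, outerCD_mul_outerCD, hC₁₀, zero_smul]
  have hPM₀ : P * M₀ = M₀ := by
    rw [hP, hM₀, envId_mul, add_mul, hQ00, hQ10, add_zero]
  have hPM₁ : P * M₁ = M₁ := by
    rw [hP, hM₁, envId_mul, add_mul, hQ01, hQ11, zero_add]
  have hM₀P : M₀ * P = M₀ := by
    rw [hP, hM₀, envId_mul, mul_add, hQ00, hQ01, add_zero]
  have hM₁P : M₁ * P = M₁ := by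
    rw [hP, hM₁, envId_mul, mul_add, hQ10, hQ11, zero_add]
  -- the H-block is diagonal
  have hX01 : M₀ * HtensI H * M₁ = 0 := by
    rw [hM₀, hM₁, hQ₀, hQ₁, rankOne_eq_outerCD, rankOne_eq_outerCD]
    exact envId_HtensI_cross C₀ C₀ C₁ C₁ H hcross
  have hX10 : M₁ * HtensI H * M₀ = 0 := by
    rw [hM₀, hM₁, hQ₀, hQ₁, rankOne_eq_outerCD, rankOne_eq_outerCD]
    exact envId_HtensI_cross C₁ C₁ C₀ C₀ H hcross'
  set A : Matrix (Fin dE × Fin dP × Fin dA) (Fin dE × Fin dP × Fin dA) ℂ :=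
    P * HtensI H * P with hA
  -- A commutes with M₀ and M₁
  have hAM₀ : A * M₀ = M₀ * A := by
    have h1 : A * M₀ = M₀ * HtensI H * M₀ := by
      rw [hA, mul_assoc (P * HtensI H) P M₀, hPM₀, hPsum, add_mul, add_mul,
        hX10, add_zero]
    have h2 : M₀ * A = M₀ * HtensI H * M₀ := by
      rw [hA, ← mul_assoc, ← mul_assoc, hM₀P, hPsum, mul_add, hX01, add_zero]
    rw [h1, h2]
  have hAM₁ : A * M₁ = M₁ * A := by
    have h1 : A * M₁ = M₁ * HtensI H * M₁ := by
      rw [hA, mul_assoc (P * HtensI H) P M₁, hPM₁, hPsum, add_mul, add_mul,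
        hX01, zero_add]
    have h2 : M₁ * A = M₁ * HtensI H * M₁ := by
      rw [hA, ← mul_assoc, ← mul_assoc, hM₁P, hPsum, mul_add, hX10, zero_add]
    rw [h1, h2]
  -- compute the projected G operator
  have hG : P * GtensI G * P
      = innPA C₀ (applyBI G C₀) • M₀ + innPA C₁ (applyBI G C₁) • M₁ := by
    rw [GtensI_eq_envId, hP, envId_mul, envId_mul, hM₀, hM₁, ← envId_smul, ← envId_smul,
      ← envId_add]
    congr 1
    rw [hQ₀, hQ₁, rankOne_eq_outerCD, rankOne_eq_outerCD]
    simp only [add_mul, mul_add, outerCD_Gpa_outerCD]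
    rw [hcross G, hcross' G, zero_smul, zero_smul, add_zero, zero_add]
  rw [hG]
  rw [mul_add, add_mul, mul_smul_comm, mul_smul_comm, smul_mul_assoc, smul_mul_assoc,
    hAM₀, hAM₁]
  abel
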